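/- Let A be a unital complex C*-algebra, D ∈ A selfadjoint and invertible, and γ ∈ A a selfadjoint unitary (γ = γ*, γ² = 1) satisfying γD = −Dγ. Then for every t ∈ (0, 1], the Higson transform of t^{-1}D, namely h(t^{-1}D) = t²·(t² + D²)^{-1}·γ − t·D·(t² + D²)^{-1} + (1 − γ)/2, satisfies ‖h(t^{-1}D) − (1 − γ)/2‖ ≤ (‖D^{-1}‖ + ‖D^{-1}‖²)·t. -/

import Mathlib

/-- The Higson transform of `t⁻¹ D`, namely
`h(t⁻¹D) = t² (t² + D²)⁻¹ γ − t D (t² + D²)⁻¹ + (1 − γ)/2`. -/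
noncomputable def higsonScaled {A : Type*} [Ring A] [Algebra ℂ A] (D γ : A) (t : ℝ) : A :=
  ((t : ℂ) ^ 2) • Ring.inverse (((t : ℂ) ^ 2) • (1 : A) + D ^ 2) * γ
    - (t : ℂ) • (D * Ring.inverse (((t : ℂ) ^ 2) • (1 : A) + D ^ 2))
    + (2 : ℂ)⁻¹ • (1 - γ)

lemma higson_aux {A : Type*} [CStarAlgebra A] [Nontrivial A] [PartialOrder A] [StarOrderedRing A]
    (D γ : A) (hD : IsSelfAdjoint D) (hDunit : IsUnit D)
    (hγ : IsSelfAdjoint γ) (hγ2 : γ * γ = 1)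
    (t : ℝ) (ht0 : 0 < t) (ht1 : t ≤ 1) :
    ‖higsonScaled D γ t - (2 : ℂ)⁻¹ • (1 - γ)‖
      ≤ (‖Ring.inverse D‖ + ‖Ring.inverse D‖ ^ 2) * t := by
  set T : A := ((t : ℂ) ^ 2) • (1 : A) + D ^ 2 with hTdef
  -- basic positivity facts
  have hsm : (0 : A) ≤ ((t : ℂ) ^ 2) • (1 : A) := by
    have h1 : ((t : ℂ) ^ 2) • (1 : A)
        = star ((t : ℂ) • (1 : A)) * ((t : ℂ) • (1 : A)) := by
      simp [star_smul, Complex.conj_ofReal, smul_mul_smul_comm, sq, mul_smul, Complex.coe_smul]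
    rw [h1]
    exact star_mul_self_nonneg _
  have hD2 : (0 : A) ≤ D ^ 2 := by
    simpa [sq, hD.star_eq] using star_mul_self_nonneg D
  have hT_nonneg : (0 : A) ≤ T := add_nonneg hsm hD2
  have hle : D ^ 2 ≤ T := le_add_of_nonneg_left hsm
  have hD2unit : IsUnit (D ^ 2) := hDunit.pow 2
  have hTunit : IsUnit T := CStarAlgebra.isUnit_of_le (D ^ 2) hle ⟨hD2, hD2unit⟩
  set u : Aˣ := hD2unit.unit with hudef
  set v : Aˣ := hTunit.unit with hvdef
  have hu : (u : A) = D ^ 2 := hD2unit.unit_spec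
  have hv : (v : A) = T := hTunit.unit_spec
  set R : A := Ring.inverse T with hRdef
  have hR : R = (↑v⁻¹ : A) := by rw [hRdef, ← hv, Ring.inverse_unit]
  have hRnonneg : (0 : A) ≤ R := by
    rw [hR]; exact CFC.inv_nonneg_of_nonneg v (hv ▸ hT_nonneg)
  have hRsa : star R = R := (IsSelfAdjoint.of_nonneg hRnonneg).star_eq
  have huinv_nonneg : (0 : A) ≤ (↑u⁻¹ : A) :=
    CFC.inv_nonneg_of_nonneg u (hu ▸ hD2)
  have hinvle : (↑v⁻¹ : A) ≤ (↑u⁻¹ : A) :=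
    CStarAlgebra.inv_le_inv (a := u) (b := v) (hu ▸ hD2) (by rw [hu, hv]; exact hle)
  have hnorm1 : ‖R‖ ≤ ‖(↑u⁻¹ : A)‖ := by
    rw [hR]
    exact CStarAlgebra.norm_le_norm_of_nonneg_of_le (hR ▸ hRnonneg) hinvle
  have huinv_eq : (↑u⁻¹ : A) = (Ring.inverse D) ^ 2 := by
    rw [Ring.inverse_pow, ← hu, Ring.inverse_unit]
  have hnormu : ‖(↑u⁻¹ : A)‖ ≤ ‖Ring.inverse D‖ ^ 2 := by
    rw [huinv_eq, sq, sq]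
    exact norm_mul_le _ _
  have hRle : ‖R‖ ≤ ‖Ring.inverse D‖ ^ 2 := hnorm1.trans hnormu
  -- bound on ‖D * R‖
  have hDR : ‖D * R‖ ≤ ‖Ring.inverse D‖ := by
    have key : star (D * R) * (D * R) = R * D ^ 2 * R := by
      rw [star_mul, hRsa, hD.star_eq, sq]
      simp [mul_assoc]
    have hconj : R * D ^ 2 * R ≤ R * T * R := by
      have h := star_left_conjugate_le_conjugate hle R
      rwa [hRsa] at h
    have hRTR : R * T * R = R := by
      rw [hR, ← hv, Units.inv_mul, one_mul]
    have hnonneg' : (0 : A) ≤ R * D ^ 2 * R := by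
      have := star_left_conjugate_nonneg hD2 R
      rwa [hRsa] at this
    have h1 : ‖D * R‖ * ‖D * R‖ ≤ ‖R‖ := by
      calc ‖D * R‖ * ‖D * R‖ = ‖star (D * R) * (D * R)‖ :=
            (CStarRing.norm_star_mul_self).symm
        _ = ‖R * D ^ 2 * R‖ := by rw [key]
        _ ≤ ‖R‖ := by
            have := CStarAlgebra.norm_le_norm_of_nonneg_of_le hnonneg' (hRTR ▸ hconj)
            exact this
    have h2 : ‖D * R‖ * ‖D * R‖ ≤ ‖Ring.inverse D‖ ^ 2 := h1.trans hRle
    nlinarith [norm_nonneg (D * R), norm_nonneg (Ring.inverse D)]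
  -- the norm of γ
  have hγnorm : ‖γ‖ = 1 := by
    have h : ‖γ‖ * ‖γ‖ = 1 := by
      rw [← CStarRing.norm_star_mul_self, hγ.star_eq, hγ2, norm_one]
    rcases mul_self_eq_one_iff.mp h with h1 | h1
    · exact h1
    · nlinarith [norm_nonneg γ]
  -- assembly
  have hdiff : higsonScaled D γ t - (2 : ℂ)⁻¹ • (1 - γ)
      = ((t : ℂ) ^ 2) • R * γ - (t : ℂ) • (D * R) := by
    rw [higsonScaled, ← hTdef, ← hRdef, add_sub_cancel_right]
  rw [hdiff]
  have hb1 : ‖((t : ℂ) ^ 2) • R * γ‖ ≤ t ^ 2 * ‖Ring.inverse D‖ ^ 2 := by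
    calc ‖((t : ℂ) ^ 2) • R * γ‖ ≤ ‖((t : ℂ) ^ 2) • R‖ * ‖γ‖ := norm_mul_le _ _
      _ = t ^ 2 * ‖R‖ := by
          rw [hγnorm, mul_one, norm_smul]
          simp [abs_of_pos ht0]
      _ ≤ t ^ 2 * ‖Ring.inverse D‖ ^ 2 := by
          exact mul_le_mul_of_nonneg_left hRle (by positivity)
  have hb2 : ‖(t : ℂ) • (D * R)‖ ≤ t * ‖Ring.inverse D‖ := by
    rw [norm_smul, Complex.norm_real, Real.norm_eq_abs, abs_of_pos ht0]
    exact mul_le_mul_of_nonneg_left hDR ht0.le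
  calc ‖((t : ℂ) ^ 2) • R * γ - (t : ℂ) • (D * R)‖
      ≤ ‖((t : ℂ) ^ 2) • R * γ‖ + ‖(t : ℂ) • (D * R)‖ := norm_sub_le _ _
    _ ≤ t ^ 2 * ‖Ring.inverse D‖ ^ 2 + t * ‖Ring.inverse D‖ := add_le_add hb1 hb2
    _ ≤ (‖Ring.inverse D‖ + ‖Ring.inverse D‖ ^ 2) * t := by
        nlinarith [mul_nonneg (mul_nonneg (sub_nonneg.mpr ht1) (sq_nonneg ‖Ring.inverse D‖)) ht0.le]

/-- For `D` selfadjoint and invertible and `γ` a selfadjoint unitary anticommuting with `D`,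
the Higson transforms of `t⁻¹ D` converge to the projection `(1 − γ)/2` at rate `O(t)`:
`‖h(t⁻¹D) − (1 − γ)/2‖ ≤ (‖D⁻¹‖ + ‖D⁻¹‖²) t` for `t ∈ (0, 1]`. -/
theorem higsonScaled_estimate {A : Type*} [CStarAlgebra A]
    (D γ : A) (hD : IsSelfAdjoint D) (hDunit : IsUnit D)
    (hγ : IsSelfAdjoint γ) (hγ2 : γ * γ = 1) (hanti : γ * D = -(D * γ))
    (t : ℝ) (ht0 : 0 < t) (ht1 : t ≤ 1) :
    ‖higsonScaled D γ t - (2 : ℂ)⁻¹ • (1 - γ)‖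
      ≤ (‖Ring.inverse D‖ + ‖Ring.inverse D‖ ^ 2) * t := by
  rcases subsingleton_or_nontrivial A with hs | hn
  · have h0 : higsonScaled D γ t - (2 : ℂ)⁻¹ • (1 - γ) = 0 := Subsingleton.elim _ _
    rw [h0, norm_zero]
    positivity
  · let _i : PartialOrder A := CStarAlgebra.spectralOrder A
    have _i2 : StarOrderedRing A := CStarAlgebra.spectralOrderedRing A
    exact higson_aux D γ hD hDunit hγ hγ2 t ht0 ht1
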